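/- arXiv:2104.11058 — 3 statements merged into one kernel-verified Lean document; each statement's English description precedes it below -/
import Mathlib

section
/- Let σ₁, σ₂ : I → V be a Legendre curve frame and let 𝔮 ∈ V be a nonzero vector. Then B(σ₁(t), 𝔮) = 0 and B(σ₂(t), 𝔮) = 0 for all t ∈ I if and only if 𝔮 ∈ C(t) for all t ∈ I. In particular, if the curve C is orthogonal to a nonzero constant vector 𝔮 then C is circular, with 𝔮 a constant section of C. -/
noncomputable section

/-- `V = ℝ⁵`. -/
abbrev V : Type := Fin 5 → ℝ

/-- The symmetric bilinear form of signature (3,2) on `V`. -/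
def bB (x y : V) : ℝ := x 0 * y 0 + x 1 * y 1 + x 2 * y 2 - x 3 * y 3 - x 4 * y 4

/-- The skew-symmetric endomorphism `a ∧ b` of `V`. -/
def wedge (a b : V) : V →L[ℝ] V :=
  LinearMap.toContinuousLinearMap
    { toFun := fun x => bB a x • b - bB b x • a
      map_add' := by
        intro x y
        have h1 : bB a (x + y) = bB a x + bB a y := by simp [bB]; ring
        have h2 : bB b (x + y) = bB b x + bB b y := by simp [bB]; ring
        try dsimp only
        rw [h1, h2]; module
      map_smul' := by
        intro c x
        have h1 : bB a (c • x) = c * bB a x := by simp [bB]; ring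
        have h2 : bB b (c • x) = c * bB b x := by simp [bB]; ring
        try dsimp only
        rw [h1, h2]
        simp only [RingHom.id_apply]
        module }


/-- `bB` as a mathlib bilinear form. -/
def BF : LinearMap.BilinForm ℝ V :=
  LinearMap.mk₂ ℝ bB
    (fun x y z => by simp [bB]; ring)
    (fun a x y => by simp [bB]; ring)
    (fun x y z => by simp [bB]; ring)
    (fun a x y => by simp [bB]; ring)

@[simp] lemma BF_apply (x y : V) : BF x y = bB x y := rfl

lemma BF_symm : BF.IsSymm := ⟨fun x y => by simp [bB]; ring⟩

lemma BF_nondeg : BF.Nondegenerate := by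
  constructor
  all_goals
    intro x hx
    funext i
    fin_cases i
    · have := hx (Pi.single 0 1); simpa [bB, Pi.single_apply] using this
    · have := hx (Pi.single 1 1); simpa [bB, Pi.single_apply] using this
    · have := hx (Pi.single 2 1); simpa [bB, Pi.single_apply] using this
    · have h := hx (Pi.single 3 1); simp [bB, Pi.single_apply] at h; simpa using h
    · have h := hx (Pi.single 4 1); simp [bB, Pi.single_apply] at h; simpa using h

/-- `x ↦ bB x q` as a continuous linear functional. -/
def Lq (q : V) : V →L[ℝ] ℝ :=
  LinearMap.toContinuousLinearMap
    { toFun := fun x => bB x q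
      map_add' := fun x y => by simp [bB]; ring
      map_smul' := fun a x => by simp [bB]; ring }

@[simp] lemma Lq_apply (q x : V) : Lq q x = bB x q := rfl

/-- If `f` is smooth on an open set and orthogonal to `q` there, so is its derivative. -/
lemma deriv_orth {I : Set ℝ} (hI : IsOpen I) {f : ℝ → V} (hf : ContDiffOn ℝ (⊤ : ℕ∞) f I)
    {q : V} (h0 : ∀ s ∈ I, bB (f s) q = 0) {t : ℝ} (ht : t ∈ I) :
    bB (deriv f t) q = 0 := by
  have hd : DifferentiableAt ℝ f t :=
    (hf.contDiffAt (hI.mem_nhds ht)).differentiableAt (by simp)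
  have hD : HasDerivAt (fun s => Lq q (f s)) (Lq q (deriv f t)) t :=
    (Lq q).hasFDerivAt.comp_hasDerivAt t hd.hasDerivAt
  have heq : (fun s => Lq q (f s)) =ᶠ[nhds t] (fun _ => (0 : ℝ)) :=
    Filter.eventuallyEq_of_mem (hI.mem_nhds ht) (fun s hs => by simpa using h0 s hs)
  have hD0 : HasDerivAt (fun _ : ℝ => (0 : ℝ)) (Lq q (deriv f t)) t :=
    hD.congr_of_eventuallyEq heq.symm
  have := hD0.unique (hasDerivAt_const t 0)
  simpa using this

/-- Membership in `C(t) = span{σ₁(t), σ₂(t)}`. -/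
def memC (σ₁ σ₂ : ℝ → V) (t : ℝ) (x : V) : Prop :=
  ∃ a b : ℝ, x = a • σ₁ t + b • σ₂ t

/-- A Legendre curve frame on an open interval `I`. -/
structure LegendreCurveFrame (I : Set ℝ) (σ₁ σ₂ : ℝ → V) : Prop where
  isOpen : IsOpen I
  ordConn : I.OrdConnected
  smooth₁ : ContDiffOn ℝ (⊤ : ℕ∞) σ₁ I
  smooth₂ : ContDiffOn ℝ (⊤ : ℕ∞) σ₂ I
  indep : ∀ t ∈ I, ∀ a b : ℝ, a • σ₁ t + b • σ₂ t = 0 → a = 0 ∧ b = 0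
  iso₁₁ : ∀ t ∈ I, bB (σ₁ t) (σ₁ t) = 0
  iso₁₂ : ∀ t ∈ I, bB (σ₁ t) (σ₂ t) = 0
  iso₂₂ : ∀ t ∈ I, bB (σ₂ t) (σ₂ t) = 0
  d₁₁ : ∀ t ∈ I, bB (deriv σ₁ t) (σ₁ t) = 0
  d₁₂ : ∀ t ∈ I, bB (deriv σ₁ t) (σ₂ t) = 0
  d₂₁ : ∀ t ∈ I, bB (deriv σ₂ t) (σ₁ t) = 0
  d₂₂ : ∀ t ∈ I, bB (deriv σ₂ t) (σ₂ t) = 0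
  rank3 : ∀ t ∈ I,
    Module.finrank ℝ
      ↥(Submodule.span ℝ ({σ₁ t, σ₂ t, deriv σ₁ t, deriv σ₂ t} : Set V)) = 3


lemma key_mem (I : Set ℝ) (σ₁ σ₂ : ℝ → V) (h : LegendreCurveFrame I σ₁ σ₂) (q : V)
    (horth : ∀ t ∈ I, bB (σ₁ t) q = 0 ∧ bB (σ₂ t) q = 0) {t : ℝ} (ht : t ∈ I) :
    memC σ₁ σ₂ t q := by
  set W : Submodule ℝ V :=
    Submodule.span ℝ ({σ₁ t, σ₂ t, deriv σ₁ t, deriv σ₂ t} : Set V) with hW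
  set C : Submodule ℝ V := Submodule.span ℝ ({σ₁ t, σ₂ t} : Set V) with hC
  have mem_orth : ∀ x : V, bB (σ₁ t) x = 0 → bB (σ₂ t) x = 0 →
      bB (deriv σ₁ t) x = 0 → bB (deriv σ₂ t) x = 0 → x ∈ BF.orthogonal W := by
    intro x h1 h2 h3 h4
    rw [LinearMap.BilinForm.mem_orthogonal_iff]
    intro n hn
    have hker : W ≤ LinearMap.ker (BF.flip x) := by
      rw [hW, Submodule.span_le]
      rintro y (rfl | rfl | rfl | rfl) <;>
        simp_all [LinearMap.mem_ker, LinearMap.flip_apply]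
    have := hker hn
    simpa [LinearMap.BilinForm.IsOrtho, LinearMap.mem_ker, LinearMap.flip_apply] using this
  have hCW : C ≤ BF.orthogonal W := by
    rw [hC, Submodule.span_le]
    rintro y (rfl | rfl)
    · exact mem_orth _ (h.iso₁₁ t ht) ((BF_symm.eq _ _).symm.trans (h.iso₁₂ t ht))
        (h.d₁₁ t ht) (h.d₂₁ t ht)
    · exact mem_orth _ (h.iso₁₂ t ht) (h.iso₂₂ t ht) (h.d₁₂ t ht) (h.d₂₂ t ht)
  have hdimV : Module.finrank ℝ V = 5 := by simp [Module.finrank_fin_fun]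
  have hdimW : Module.finrank ℝ W = 3 := h.rank3 t ht
  have hdimO : Module.finrank ℝ (BF.orthogonal W) = 2 := by
    rw [LinearMap.BilinForm.finrank_orthogonal BF_nondeg, hdimV, hdimW]
  have hli : LinearIndependent ℝ ![σ₁ t, σ₂ t] :=
    LinearIndependent.pair_iff.2 (fun a b hab => h.indep t ht a b hab)
  have hdimC : Module.finrank ℝ C = 2 := by
    have hr : Set.range ![σ₁ t, σ₂ t] = ({σ₁ t, σ₂ t} : Set V) := by
      simp [Matrix.range_cons, Matrix.range_empty, Set.pair_comm]
    have := finrank_span_eq_card hli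
    rw [hr] at this
    simpa [hC] using this
  have hEq : C = BF.orthogonal W := Submodule.eq_of_le_of_finrank_le hCW (by omega)
  have hq3 : bB (deriv σ₁ t) q = 0 :=
    deriv_orth h.isOpen h.smooth₁ (fun s hs => (horth s hs).1) ht
  have hq4 : bB (deriv σ₂ t) q = 0 :=
    deriv_orth h.isOpen h.smooth₂ (fun s hs => (horth s hs).2) ht
  have hqC : q ∈ C := hEq ▸ mem_orth q (horth t ht).1 (horth t ht).2 hq3 hq4
  rw [hC, Submodule.mem_span_pair] at hqC
  obtain ⟨a, b, hab⟩ := hqC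
  exact ⟨a, b, hab.symm⟩

/-- The curve `C` is circular. -/
def Circular (I : Set ℝ) (σ₁ σ₂ : ℝ → V) : Prop :=
  ∃ v : V, v ≠ 0 ∧ ∀ t ∈ I, memC σ₁ σ₂ t v

/-- `ξ(t)` is a sum of endomorphisms `a ∧ b` with `a ∈ C(t)` and `b ∈ C(t)^⊥`. -/
def PolarForm (I : Set ℝ) (σ₁ σ₂ : ℝ → V) (ξ : ℝ → V →L[ℝ] V) : Prop :=
  ∀ t ∈ I, ∃ b₁ b₂ : V,
    bB b₁ (σ₁ t) = 0 ∧ bB b₁ (σ₂ t) = 0 ∧ bB b₂ (σ₁ t) = 0 ∧ bB b₂ (σ₂ t) = 0 ∧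
    ξ t = wedge (σ₁ t) b₁ + wedge (σ₂ t) b₂

/-- `Q` represents the quadratic differential of `ξ`. -/
def IsQuadDiff (I : Set ℝ) (σ₁ σ₂ : ℝ → V) (ξ : ℝ → V →L[ℝ] V) (Q : ℝ → ℝ) : Prop :=
  ∀ t ∈ I, ∃ a b c d : ℝ,
    ξ t (deriv σ₁ t) = a • σ₁ t + b • σ₂ t ∧
    ξ t (deriv σ₂ t) = c • σ₁ t + d • σ₂ t ∧
    Q t = a + d

/-- `ξ` is a polarisation of the curve `C`. -/
def IsPolarisation (I : Set ℝ) (σ₁ σ₂ : ℝ → V) (ξ : ℝ → V →L[ℝ] V) : Prop :=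
  ContDiffOn ℝ (⊤ : ℕ∞) ξ I ∧ PolarForm I σ₁ σ₂ ξ ∧
  ∃ Q : ℝ → ℝ, IsQuadDiff I σ₁ σ₂ ξ Q ∧ ∃ t ∈ I, Q t ≠ 0

/-- `(p₀, p₁)` is a linear conserved quantity of `d + tξ`. -/
def IsLCQ (I : Set ℝ) (σ₁ σ₂ : ℝ → V) (ξ : ℝ → V →L[ℝ] V) (p₀ : V) (p₁ : ℝ → V) : Prop :=
  ContDiffOn ℝ (⊤ : ℕ∞) p₁ I ∧
  (∀ t ∈ I, memC σ₁ σ₂ t (p₁ t)) ∧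
  ∀ t ∈ I, deriv p₁ t + ξ t p₀ = 0


/-- a Legendre curve is orthogonal to a nonzero constant vector `𝔮`
iff `𝔮` lies in `C(t)` for all `t`; in particular such a curve is circular. -/
theorem stmt0 (I : Set ℝ) (σ₁ σ₂ : ℝ → V) (h : LegendreCurveFrame I σ₁ σ₂)
    (q : V) (hq : q ≠ 0) :
    ((∀ t ∈ I, bB (σ₁ t) q = 0 ∧ bB (σ₂ t) q = 0) ↔ (∀ t ∈ I, memC σ₁ σ₂ t q)) ∧
    ((∀ t ∈ I, bB (σ₁ t) q = 0 ∧ bB (σ₂ t) q = 0) → Circular I σ₁ σ₂) := by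
  have fwd : (∀ t ∈ I, bB (σ₁ t) q = 0 ∧ bB (σ₂ t) q = 0) → (∀ t ∈ I, memC σ₁ σ₂ t q) :=
    fun ho t ht => key_mem I σ₁ σ₂ h q ho ht
  have bwd : (∀ t ∈ I, memC σ₁ σ₂ t q) → (∀ t ∈ I, bB (σ₁ t) q = 0 ∧ bB (σ₂ t) q = 0) := by
    intro hm t ht
    obtain ⟨a, b, hab⟩ := hm t ht
    have e1 : bB (σ₁ t) q = a * bB (σ₁ t) (σ₁ t) + b * bB (σ₁ t) (σ₂ t) := by
      rw [hab]; simp [bB]; ring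
    have e2 : bB (σ₂ t) q = a * bB (σ₂ t) (σ₁ t) + b * bB (σ₂ t) (σ₂ t) := by
      rw [hab]; simp [bB]; ring
    have hs : bB (σ₂ t) (σ₁ t) = bB (σ₁ t) (σ₂ t) := by simp [bB]; ring
    rw [e1, e2, hs, h.iso₁₁ t ht, h.iso₁₂ t ht, h.iso₂₂ t ht]
    constructor <;> ring
  exact ⟨⟨fwd, bwd⟩, fun ho => ⟨q, hq, fwd ho⟩⟩
end
end

section
/- Let σ₁, σ₂ : I → V be a Legendre curve frame and let ξ : I → End(V) be smooth with ξ(t) a sum of endomorphisms a ∧ b with a ∈ C(t) and b ∈ C(t)^⊥, for every t ∈ I. If (p₀, p₁) and (p₀, p̃₁) are linear conserved quantities of d + tξ with the same constant term p₀ ∈ V, then either p₁ = p̃₁ on I, or C is circular. -/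
noncomputable section

/-- two linear conserved quantities with the same constant term agree,
unless `C` is circular. -/
theorem stmt2 (I : Set ℝ) (σ₁ σ₂ : ℝ → V) (h : LegendreCurveFrame I σ₁ σ₂)
    (ξ : ℝ → V →L[ℝ] V) (hξs : ContDiffOn ℝ (⊤ : ℕ∞) ξ I)
    (hξf : PolarForm I σ₁ σ₂ ξ)
    (p₀ : V) (p₁ p₁' : ℝ → V)
    (hp : IsLCQ I σ₁ σ₂ ξ p₀ p₁) (hp' : IsLCQ I σ₁ σ₂ ξ p₀ p₁') :
    (∀ t ∈ I, p₁ t = p₁' t) ∨ Circular I σ₁ σ₂ := by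
  classical
  set q : ℝ → V := fun t => p₁ t - p₁' t with hq
  -- q has derivative 0 on I
  have hconv : Convex ℝ I := h.ordConn.convex
  have hdiff₁ : ∀ t ∈ I, DifferentiableAt ℝ p₁ t := fun t ht =>
    (hp.1.contDiffAt (h.isOpen.mem_nhds ht)).differentiableAt (by norm_num)
  have hdiff₂ : ∀ t ∈ I, DifferentiableAt ℝ p₁' t := fun t ht =>
    (hp'.1.contDiffAt (h.isOpen.mem_nhds ht)).differentiableAt (by norm_num)
  have hderiv : ∀ t ∈ I, HasDerivAt q 0 t := by
    intro t ht
    have h1 : HasDerivAt p₁ (deriv p₁ t) t := (hdiff₁ t ht).hasDerivAt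
    have h2 : HasDerivAt p₁' (deriv p₁' t) t := (hdiff₂ t ht).hasDerivAt
    have e1 : deriv p₁ t = -(ξ t p₀) := by
      have := hp.2.2 t ht; linear_combination (norm := module) this
    have e2 : deriv p₁' t = -(ξ t p₀) := by
      have := hp'.2.2 t ht; linear_combination (norm := module) this
    have := h1.sub h2
    rw [e1, e2, sub_self] at this
    exact this
  -- q is constant on I
  have hconst : ∀ t ∈ I, ∀ s ∈ I, q t = q s := by
    intro t ht s hs
    have hdo : DifferentiableOn ℝ q I := fun x hx =>
      ((hderiv x hx).differentiableAt).differentiableWithinAt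
    have hf0 : ∀ x ∈ I, fderivWithin ℝ q I x = 0 := by
      intro x hx
      have hfd : HasFDerivAt q ((1 : ℝ →L[ℝ] ℝ).smulRight (0 : V)) x :=
        (hderiv x hx).hasFDerivAt
      rw [fderivWithin_of_isOpen h.isOpen hx, hfd.fderiv]
      ext y i
      simp
    exact hconv.is_const_of_fderivWithin_eq_zero hdo hf0 ht hs
  by_cases heq : ∀ t ∈ I, p₁ t = p₁' t
  · exact Or.inl heq
  · right
    push_neg at heq
    obtain ⟨t₀, ht₀, hne⟩ := heq
    refine ⟨q t₀, sub_ne_zero.mpr hne, ?_⟩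
    intro t ht
    have hqt : q t₀ = q t := hconst t₀ ht₀ t ht
    obtain ⟨a, b, hab⟩ := hp.2.1 t ht
    obtain ⟨c, d, hcd⟩ := hp'.2.1 t ht
    refine ⟨a - c, b - d, ?_⟩
    rw [hqt]
    simp only [hq, hab, hcd]
    module
end
end

section
/- Let σ₁, σ₂ : I → V be a Legendre curve frame, ξ a polarisation of C, and (p₀, p₁), (q₀, q₁) linear conserved quantities of d + tξ such that B(p₀, p₀) ≠ 0, B(q₀, q₁(t)) ≠ 0 for all t ∈ I, and B(p₀, p₁(t)) = 0, B(p₀, q₁(t)) + B(q₀, p₁(t)) = 0 and B(p₀, q₀) = 0 for all t ∈ I. Set 𝔭 := p₀ and 𝔮 := q₀, and assume there exist smooth maps 𝔣, 𝔱 : I → V with 𝔣(t), 𝔱(t) ∈ C(t), B(𝔣, 𝔭) = 0, B(𝔣, 𝔮) = −1, B(𝔱, 𝔭) = −1 and B(𝔱, 𝔮) = 0 on I (the point sphere map and tangent congruence of C with respect to 𝔭, 𝔮). Then there exist a real constant c ≠ 0 and a smooth function g : I → ℝ such that c·ξ(t) − (d/dt)[g(t)·(σ₁(t) ∧ σ₂(t))]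 = −𝔣(t) ∧ 𝔣′(t) for all t ∈ I; that is, after rescaling, ξ is gauge equivalent to the arclength polarisation −𝔣 ∧ d𝔣 of C with respect to 𝔭, 𝔮. -/
noncomputable section

lemma wedge_apply (a b x : V) : wedge a b x = bB a x • b - bB b x • a := rfl

lemma bB_comm (x y : V) : bB x y = bB y x := by simp [bB]; ring
lemma bB_add_left (x y z : V) : bB (x + y) z = bB x z + bB y z := by simp [bB]; ring
lemma bB_sub_left (x y z : V) : bB (x - y) z = bB x z - bB y z := by simp [bB]; ring
lemma bB_smul_left (c : ℝ) (x z : V) : bB (c • x) z = c * bB x z := by simp [bB]; ring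
lemma bB_neg_left (x z : V) : bB (-x) z = -bB x z := by simp [bB]; ring
lemma bB_zero_left (z : V) : bB 0 z = 0 := by simp [bB]

lemma contDiff_bB_right (c : V) : ContDiff ℝ (⊤ : ℕ∞) (fun v : V => bB v c) := by
  unfold bB; fun_prop

lemma hasDerivAt_bB_right {f : ℝ → V} {f' : V} {t : ℝ} (hf : HasDerivAt f f' t) (c : V) :
    HasDerivAt (fun s => bB (f s) c) (bB f' c) t := by
  have hi : ∀ i, HasDerivAt (fun s => f s i) (f' i) t := fun i => hasDerivAt_pi.mp hf i
  have := (((((hi 0).mul_const (c 0)).add ((hi 1).mul_const (c 1))).add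
      ((hi 2).mul_const (c 2))).sub ((hi 3).mul_const (c 3))).sub ((hi 4).mul_const (c 4))
  exact this

lemma wedge_add_left (a a' b : V) : wedge (a + a') b = wedge a b + wedge a' b := by
  refine ContinuousLinearMap.ext fun x => ?_
  simp only [wedge_apply, ContinuousLinearMap.add_apply, bB_add_left]; module
lemma wedge_smul_left (c : ℝ) (a b : V) : wedge (c • a) b = c • wedge a b := by
  refine ContinuousLinearMap.ext fun x => ?_
  simp only [wedge_apply, ContinuousLinearMap.smul_apply, bB_smul_left]; module
lemma wedge_add_right (a b b' : V) : wedge a (b + b') = wedge a b + wedge a b' := by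
  refine ContinuousLinearMap.ext fun x => ?_
  simp only [wedge_apply, ContinuousLinearMap.add_apply, bB_add_left]; module
lemma wedge_smul_right (c : ℝ) (a b : V) : wedge a (c • b) = c • wedge a b := by
  refine ContinuousLinearMap.ext fun x => ?_
  simp only [wedge_apply, ContinuousLinearMap.smul_apply, bB_smul_left]; module
lemma wedge_swap (a b : V) : wedge a b = -wedge b a := by
  refine ContinuousLinearMap.ext fun x => ?_
  simp only [wedge_apply, ContinuousLinearMap.neg_apply]; module
lemma wedge_self (a : V) : wedge a a = 0 := by
  refine ContinuousLinearMap.ext fun x => ?_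
  simp only [wedge_apply, ContinuousLinearMap.zero_apply]; module

def wedgeL : V →ₗ[ℝ] V →ₗ[ℝ] (V →L[ℝ] V) :=
  LinearMap.mk₂ ℝ wedge wedge_add_left (fun c a b => wedge_smul_left c a b)
    wedge_add_right (fun c a b => wedge_smul_right c a b)

def wedgeCL : V →L[ℝ] V →L[ℝ] (V →L[ℝ] V) :=
  LinearMap.toContinuousLinearMap
    { toFun := fun u => LinearMap.toContinuousLinearMap (wedgeL u)
      map_add' := by
        intro u v
        show LinearMap.toContinuousLinearMap (wedgeL (u + v)) =
          LinearMap.toContinuousLinearMap (wedgeL u) + LinearMap.toContinuousLinearMap (wedgeL v)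
        rw [map_add wedgeL u v, map_add]
      map_smul' := by
        intro c u
        show LinearMap.toContinuousLinearMap (wedgeL (c • u)) =
          (RingHom.id ℝ) c • LinearMap.toContinuousLinearMap (wedgeL u)
        rw [map_smul wedgeL c u, map_smul]
        rfl }

lemma wedgeCL_apply (u v : V) : wedgeCL u v = wedge u v := rfl

lemma hasDerivAt_wedge {f g : ℝ → V} {f' g' : V} {t : ℝ}
    (hf : HasDerivAt f f' t) (hg : HasDerivAt g g' t) :
    HasDerivAt (fun s => wedge (f s) (g s)) (wedge f' (g t) + wedge (f t) g') t := by
  have h0 : HasFDerivAt (𝕜 := ℝ) wedgeCL wedgeCL (f t) := by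
    apply ContinuousLinearMap.hasFDerivAt
  have h1 : HasDerivAt (fun s => wedgeCL (f s)) (wedgeCL f') t := by
    rw [hasDerivAt_iff_tendsto_slope] at hf
    refine (hasDerivAt_iff_tendsto_slope (𝕜 := ℝ) (F := V →L[ℝ] V →L[ℝ] V)).mpr ?_
    refine ((wedgeCL.continuous.tendsto f').comp hf).congr ?_
    intro s
    simp only [Function.comp_apply, slope_def_module, map_smul, map_sub]
  have h2 : HasDerivAt (fun s => wedgeCL (f s) (g s)) (wedgeCL f' (g t) + wedgeCL (f t) g') t :=
    h1.clm_apply hg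
  simpa [wedgeCL_apply] using h2

lemma keylem (s1 s2 b1 b2 df dt p q : V) (a b e d lam dlam al : ℝ)
    (hfp' : a * bB s1 p + b * bB s2 p = 0)
    (hfq' : a * bB s1 q + b * bB s2 q = -1)
    (htp' : e * bB s1 p + d * bB s2 p = -1)
    (htq' : e * bB s1 q + d * bB s2 q = 0)
    (hdfq : bB df q = 0)
    (h7 : dlam • (a•s1 + b•s2) + lam • df + (bB s1 p • b1 - bB b1 p • s1)
        + (bB s2 p • b2 - bB b2 p • s2) = 0)
    (h8 : al • df - dlam • (e•s1 + d•s2) - lam • dt + (bB s1 q • b1 - bB b1 q • s1)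
        + (bB s2 q • b2 - bB b2 q • s2) = 0) :
    wedge s1 b1 + wedge s2 b2
      = al • wedge (a•s1 + b•s2) df - dlam • wedge (a•s1 + b•s2) (e•s1 + d•s2)
        + lam • wedge (e•s1 + d•s2) df - lam • wedge (a•s1 + b•s2) dt := by
  have hB1p : (a*d - b*e) * bB s1 p = b := by linear_combination d * hfp' - b * htp'
  have hB2p : (a*d - b*e) * bB s2 p = -a := by linear_combination (-e) * hfp' + a * htp'
  have hB1q : (a*d - b*e) * bB s1 q = -d := by linear_combination d * hfq' - b * htq'
  have hB2q : (a*d - b*e) * bB s2 q = e := by linear_combination (-e) * hfq' + a * htq'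
  have hmu : (a*d - b*e) ≠ 0 := by
    intro h0
    have hb0 : b = 0 := by linear_combination (bB s1 p) * h0 - hB1p
    have ha0 : a = 0 := by linear_combination hB2p - (bB s2 p) * h0
    have : (0:ℝ) = -1 := by linear_combination hfq' - (bB s1 q) * ha0 - (bB s2 q) * hb0
    norm_num at this
  have hq7 := congrArg (fun v => bB v q) h7
  simp only [bB_add_left, bB_sub_left, bB_smul_left, bB_zero_left] at hq7
  have hR1 : b * bB b1 q - a * bB b2 q + d * bB b1 p - e * bB b2 p = (a*d - b*e) * dlam := by
    linear_combination (a*d - b*e) * hq7 - (bB b1 q) * hB1p - (bB b2 q) * hB2p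
      + (bB b1 p) * hB1q + (bB b2 p) * hB2q - ((a*d - b*e)*lam) * hdfq
      - ((a*d - b*e)*dlam) * hfq'
  refine ContinuousLinearMap.ext fun x => ?_
  have hx7 := congrArg (fun v => bB v x) h7
  simp only [bB_add_left, bB_sub_left, bB_smul_left, bB_zero_left] at hx7
  have hx8 := congrArg (fun v => bB v x) h8
  simp only [bB_add_left, bB_sub_left, bB_smul_left, bB_zero_left] at hx8
  have hE1 : b * bB b1 x - a * bB b2 x
      = (a*d - b*e) * (bB b1 p * bB s1 x + bB b2 p * bB s2 x
          - dlam * (a * bB s1 x + b * bB s2 x) - lam * bB df x) := by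
    linear_combination (a*d - b*e) * hx7 - (bB b1 x) * hB1p - (bB b2 x) * hB2p
  have hE2 : -d * bB b1 x + e * bB b2 x
      = (a*d - b*e) * (bB b1 q * bB s1 x + bB b2 q * bB s2 x - al * bB df x
          + dlam * (e * bB s1 x + d * bB s2 x) + lam * bB dt x) := by
    linear_combination (a*d - b*e) * hx8 - (bB b1 x) * hB1q - (bB b2 x) * hB2q
  apply smul_right_injective V hmu
  simp only [wedge_apply, ContinuousLinearMap.add_apply, ContinuousLinearMap.smul_apply,
    ContinuousLinearMap.sub_apply, bB_add_left, bB_smul_left]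
  linear_combination (norm := module)
    (-((a*d - b*e) * (e * bB s1 x + d * bB s2 x))) • h7
    + (-((a*d - b*e) * (a * bB s1 x + b * bB s2 x))) • h8
    + ((e * bB s1 x + d * bB s2 x) * hB1p + (a * bB s1 x + b * bB s2 x) * hB1q) • b1
    + ((e * bB s1 x + d * bB s2 x) * hB2p + (a * bB s1 x + b * bB s2 x) * hB2q) • b2
    + (e * hE1 + a * hE2) • s1 + (d * hE1 + b * hE2) • s2
    + (-(bB s2 x * (a*d - b*e)) * hR1) • s1 + (bB s1 x * (a*d - b*e) * hR1) • s2

lemma memC_repr (s1 s2 p q f tv x : V) (a b e d u v w1 w2 : ℝ)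
    (hf : f = a•s1 + b•s2) (ht : tv = e•s1 + d•s2) (hx : x = u•s1 + v•s2)
    (hfp : bB f p = 0) (hfq : bB f q = -1) (htp : bB tv p = -1) (htq : bB tv q = 0)
    (hxp : bB x p = w1) (hxq : bB x q = w2) : x = -w2 • f - w1 • tv := by
  subst hf ht hx
  simp only [bB_add_left, bB_smul_left] at hfp hfq htp htq hxp hxq
  have hB1p : (a*d - b*e) * bB s1 p = b := by linear_combination d * hfp - b * htp
  have hB2p : (a*d - b*e) * bB s2 p = -a := by linear_combination (-e) * hfp + a * htp
  have hB1q : (a*d - b*e) * bB s1 q = -d := by linear_combination d * hfq - b * htq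
  have hB2q : (a*d - b*e) * bB s2 q = e := by linear_combination (-e) * hfq + a * htq
  have hmu : (a*d - b*e) ≠ 0 := by
    intro h0
    have hb0 : b = 0 := by linear_combination (bB s1 p) * h0 - hB1p
    have ha0 : a = 0 := by linear_combination hB2p - (bB s2 p) * h0
    have : (0:ℝ) = -1 := by linear_combination hfq - (bB s1 q) * ha0 - (bB s2 q) * hb0
    norm_num at this
  have hU1 : b*u - a*v = (a*d - b*e)*w1 := by
    linear_combination (a*d - b*e) * hxp - u * hB1p - v * hB2p
  have hU2 : -d*u + e*v = (a*d - b*e)*w2 := by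
    linear_combination (a*d - b*e) * hxq - u * hB1q - v * hB2q
  have hu : u = -(e*w1 + a*w2) := by
    have h' : (a*d - b*e) * u = (a*d - b*e) * (-(e*w1 + a*w2)) := by
      linear_combination (-e) * hU1 - a * hU2
    exact mul_left_cancel₀ hmu h'
  have hv : v = -(d*w1 + b*w2) := by
    have h' : (a*d - b*e) * v = (a*d - b*e) * (-(d*w1 + b*w2)) := by
      linear_combination (-d) * hU1 - b * hU2
    exact mul_left_cancel₀ hmu h'
  rw [hu, hv]; module

lemma deriv_bB_const {f : ℝ → V} {f' : V} {I : Set ℝ} (hI : IsOpen I) {t : ℝ} (ht : t ∈ I)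
    (hf : HasDerivAt f f' t) (c : V) (k : ℝ) (hconst : ∀ s ∈ I, bB (f s) c = k) :
    bB f' c = 0 := by
  have h1 : HasDerivAt (fun s => bB (f s) c) (bB f' c) t := hasDerivAt_bB_right hf c
  have h2 : (fun s => bB (f s) c) =ᶠ[nhds t] fun _ => k :=
    Filter.eventuallyEq_of_mem (hI.mem_nhds ht) hconst
  have h3 := h2.deriv_eq
  rw [h1.deriv, deriv_const] at h3
  exact h3

/-- a polarisation admitting a suitable 2-dimensional space of linear conserved
quantities is, after rescaling and a gauge transformation, the arclength polarisation
`-𝔣 ∧ d𝔣` with respect to `𝔭 := p₀`, `𝔮 := q₀`. -/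
theorem stmt6 (I : Set ℝ) (σ₁ σ₂ : ℝ → V) (h : LegendreCurveFrame I σ₁ σ₂)
    (ξ : ℝ → V →L[ℝ] V) (hξ : IsPolarisation I σ₁ σ₂ ξ)
    (p₀ q₀ : V) (p₁ q₁ : ℝ → V)
    (hp : IsLCQ I σ₁ σ₂ ξ p₀ p₁) (hq : IsLCQ I σ₁ σ₂ ξ q₀ q₁)
    (hpp : bB p₀ p₀ ≠ 0)
    (hqinf : ∀ t ∈ I, bB q₀ (q₁ t) ≠ 0)
    (hpinf : ∀ t ∈ I, bB p₀ (p₁ t) = 0)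
    (hpqinf : ∀ t ∈ I, bB p₀ (q₁ t) + bB q₀ (p₁ t) = 0)
    (hpq0 : bB p₀ q₀ = 0)
    (fm tm : ℝ → V)
    (hfs : ContDiffOn ℝ (⊤ : ℕ∞) fm I) (hts : ContDiffOn ℝ (⊤ : ℕ∞) tm I)
    (hfC : ∀ t ∈ I, memC σ₁ σ₂ t (fm t)) (htC : ∀ t ∈ I, memC σ₁ σ₂ t (tm t))
    (hfp : ∀ t ∈ I, bB (fm t) p₀ = 0) (hfq : ∀ t ∈ I, bB (fm t) q₀ = -1)
    (htp : ∀ t ∈ I, bB (tm t) p₀ = -1) (htq : ∀ t ∈ I, bB (tm t) q₀ = 0) :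
    ∃ c : ℝ, c ≠ 0 ∧ ∃ g : ℝ → ℝ, ContDiffOn ℝ (⊤ : ℕ∞) g I ∧
      ∀ t ∈ I, c • ξ t - deriv (fun s => g s • wedge (σ₁ s) (σ₂ s)) t
        = -(wedge (fm t) (deriv fm t)) := by
  obtain ⟨hξs, hpol, Q, hQD, t0, ht0, hQt0⟩ := hξ
  have hIo := h.isOpen
  set lam : ℝ → ℝ := fun s => -(bB (p₁ s) q₀) with hlam_def
  set al : ℝ → ℝ := fun s => -(bB (q₁ s) q₀) with hal_def
  have hlam_sm : ContDiffOn ℝ (⊤:ℕ∞) lam I := ((contDiff_bB_right q₀).comp_contDiffOn hp.1).neg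
  have hal_sm : ContDiffOn ℝ (⊤:ℕ∞) al I := ((contDiff_bB_right q₀).comp_contDiffOn hq.1).neg
  have hdV : ∀ (F : ℝ → V), ContDiffOn ℝ (⊤:ℕ∞) F I → ∀ t ∈ I, HasDerivAt F (deriv F t) t :=
    fun F hF t ht => ((hF.contDiffAt (hIo.mem_nhds ht)).differentiableAt (by simp)).hasDerivAt
  have hdR : ∀ (F : ℝ → ℝ), ContDiffOn ℝ (⊤:ℕ∞) F I → ∀ t ∈ I, HasDerivAt F (deriv F t) t :=
    fun F hF t ht => ((hF.contDiffAt (hIo.mem_nhds ht)).differentiableAt (by simp)).hasDerivAt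
  have hp1f : ∀ t ∈ I, p₁ t = lam t • fm t := by
    intro t ht
    obtain ⟨a, b, hfm⟩ := hfC t ht
    obtain ⟨e, d, htm⟩ := htC t ht
    obtain ⟨u, v, hx⟩ := hp.2.1 t ht
    have hxp : bB (p₁ t) p₀ = 0 := by rw [bB_comm]; exact hpinf t ht
    have hxq : bB (p₁ t) q₀ = -lam t := by simp [hlam_def]
    have hr := memC_repr (σ₁ t) (σ₂ t) p₀ q₀ (fm t) (tm t) (p₁ t) a b e d u v 0 (-lam t)
      hfm htm hx (hfp t ht) (hfq t ht) (htp t ht) (htq t ht) hxp hxq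
    simpa using hr
  have hq1f : ∀ t ∈ I, q₁ t = al t • fm t - lam t • tm t := by
    intro t ht
    obtain ⟨a, b, hfm⟩ := hfC t ht
    obtain ⟨e, d, htm⟩ := htC t ht
    obtain ⟨u, v, hx⟩ := hq.2.1 t ht
    have hxp : bB (q₁ t) p₀ = lam t := by
      have h1 := hpqinf t ht
      have h2 : bB q₀ (p₁ t) = bB (p₁ t) q₀ := bB_comm _ _
      rw [bB_comm]; simp only [hlam_def]; linarith
    have hxq : bB (q₁ t) q₀ = -al t := by simp [hal_def]
    have hr := memC_repr (σ₁ t) (σ₂ t) p₀ q₀ (fm t) (tm t) (q₁ t) a b e d u v (lam t) (-al t)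
      hfm htm hx (hfp t ht) (hfq t ht) (htp t ht) (htq t ht) hxp hxq
    simpa using hr
  have hdP : ∀ t ∈ I, deriv p₁ t = lam t • deriv fm t + deriv lam t • fm t := by
    intro t ht
    have h1 : HasDerivAt (fun s => lam s • fm s) (lam t • deriv fm t + deriv lam t • fm t) t :=
      (hdR lam hlam_sm t ht).smul (hdV fm hfs t ht)
    have h2 : p₁ =ᶠ[nhds t] fun s => lam s • fm s :=
      Filter.eventuallyEq_of_mem (hIo.mem_nhds ht) hp1f
    rw [h2.deriv_eq]; exact h1.deriv
  have hdQ : ∀ t ∈ I, deriv q₁ t = (al t • deriv fm t + deriv al t • fm t)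
      - (lam t • deriv tm t + deriv lam t • tm t) := by
    intro t ht
    have h1 : HasDerivAt (fun s => al s • fm s - lam s • tm s)
        ((al t • deriv fm t + deriv al t • fm t)
          - (lam t • deriv tm t + deriv lam t • tm t)) t :=
      ((hdR al hal_sm t ht).smul (hdV fm hfs t ht)).sub
        ((hdR lam hlam_sm t ht).smul (hdV tm hts t ht))
    have h2 : q₁ =ᶠ[nhds t] fun s => al s • fm s - lam s • tm s :=
      Filter.eventuallyEq_of_mem (hIo.mem_nhds ht) hq1f
    rw [h2.deriv_eq]; exact h1.deriv
  have hdfq0 : ∀ t ∈ I, bB (deriv fm t) q₀ = 0 :=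
    fun t ht => deriv_bB_const hIo ht (hdV fm hfs t ht) q₀ (-1) hfq
  have hdtq0 : ∀ t ∈ I, bB (deriv tm t) q₀ = 0 :=
    fun t ht => deriv_bB_const hIo ht (hdV tm hts t ht) q₀ 0 htq
  have hdal : ∀ t ∈ I, deriv al t = 0 := by
    intro t ht
    obtain ⟨b₁, b₂, hb11, hb12, hb21, hb22, hxiw⟩ := hpol t ht
    have h8 := hq.2.2 t ht
    rw [hdQ t ht, hxiw] at h8
    simp only [ContinuousLinearMap.add_apply, wedge_apply] at h8
    have hpair := congrArg (fun v => bB v q₀) h8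
    simp only [bB_add_left, bB_sub_left, bB_smul_left, bB_zero_left] at hpair
    linear_combination -hpair + (deriv al t) * (hfq t ht) + (al t) * (hdfq0 t ht)
      - (deriv lam t) * (htq t ht) - (lam t) * (hdtq0 t ht)
  have hconv : Convex ℝ I := convex_iff_ordConnected.mpr h.ordConn
  have hconst : ∀ t ∈ I, al t = al t0 := by
    intro t ht
    refine hconv.is_const_of_fderivWithin_eq_zero (hal_sm.differentiableOn (by simp)) ?_ ht ht0
    intro x hx
    have h0 : HasDerivAt al 0 x := by
      have h1 := hdR al hal_sm x hx
      rwa [hdal x hx] at h1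
    rw [fderivWithin_of_isOpen hIo hx, h0.hasFDerivAt.fderiv]
    ext y
    simp
  have hal0 : al t0 ≠ 0 := by
    have h1 := hqinf t0 ht0
    rw [bB_comm] at h1
    simp only [hal_def]
    simpa using h1
  set c : ℝ := -(al t0)⁻¹ with hc_def
  have hc : c ≠ 0 := by
    simp only [hc_def, neg_ne_zero]
    exact inv_ne_zero hal0
  have hcal : ∀ t ∈ I, c * al t = -1 := by
    intro t ht
    rw [hconst t ht, hc_def]
    field_simp
  set nu : ℝ → ℝ := fun s => bB (σ₁ s) p₀ * bB (σ₂ s) q₀ - bB (σ₂ s) p₀ * bB (σ₁ s) q₀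
    with hnu_def
  have hnu_sm : ContDiffOn ℝ (⊤:ℕ∞) nu I :=
    (((contDiff_bB_right p₀).comp_contDiffOn h.smooth₁).mul
      ((contDiff_bB_right q₀).comp_contDiffOn h.smooth₂)).sub
      (((contDiff_bB_right p₀).comp_contDiffOn h.smooth₂).mul
        ((contDiff_bB_right q₀).comp_contDiffOn h.smooth₁))
  have hmuD : ∀ t ∈ I, ∀ a b e d : ℝ, fm t = a • σ₁ t + b • σ₂ t →
      tm t = e • σ₁ t + d • σ₂ t → nu t * (a*d - b*e) = -1 := by
    intro t ht a b e d hfm htm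
    have hfp' := hfp t ht; rw [hfm] at hfp'
    simp only [bB_add_left, bB_smul_left] at hfp'
    have hfq' := hfq t ht; rw [hfm] at hfq'
    simp only [bB_add_left, bB_smul_left] at hfq'
    have htp' := htp t ht; rw [htm] at htp'
    simp only [bB_add_left, bB_smul_left] at htp'
    have htq' := htq t ht; rw [htm] at htq'
    simp only [bB_add_left, bB_smul_left] at htq'
    simp only [hnu_def]
    linear_combination (e * bB (σ₁ t) q₀ + d * bB (σ₂ t) q₀) * hfp' + hfq'
      - (a * bB (σ₁ t) q₀ + b * bB (σ₂ t) q₀) * htp'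
  have hnu_ne : ∀ t ∈ I, nu t ≠ 0 := by
    intro t ht
    obtain ⟨a, b, hfm⟩ := hfC t ht
    obtain ⟨e, d, htm⟩ := htC t ht
    have hD := hmuD t ht a b e d hfm htm
    intro h0
    rw [h0, zero_mul] at hD
    norm_num at hD
  set g : ℝ → ℝ := fun s => c * lam s / nu s with hg_def
  have hg_sm : ContDiffOn ℝ (⊤:ℕ∞) g I := (contDiffOn_const.mul hlam_sm).div hnu_sm hnu_ne
  have hgW : ∀ s ∈ I, g s • wedge (σ₁ s) (σ₂ s) = (-(c * lam s)) • wedge (fm s) (tm s) := by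
    intro s hs
    obtain ⟨a, b, hfm⟩ := hfC s hs
    obtain ⟨e, d, htm⟩ := htC s hs
    have hD := hmuD s hs a b e d hfm htm
    have hw : wedge (fm s) (tm s) = (a*d - b*e) • wedge (σ₁ s) (σ₂ s) := by
      refine ContinuousLinearMap.ext fun x => ?_
      rw [hfm, htm]
      simp only [wedge_apply, ContinuousLinearMap.smul_apply, bB_add_left, bB_smul_left]
      module
    have hgs : g s = -(c * lam s) * (a*d - b*e) := by
      rw [hg_def]
      show c * lam s / nu s = _
      rw [div_eq_iff (hnu_ne s hs)]
      linear_combination (c * lam s) * hD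
    rw [hw, smul_smul, hgs]
  refine ⟨c, hc, g, hg_sm, ?_⟩
  intro t ht
  obtain ⟨a, b, hfm⟩ := hfC t ht
  obtain ⟨e, d, htm⟩ := htC t ht
  obtain ⟨b₁, b₂, hb11, hb12, hb21, hb22, hxiw⟩ := hpol t ht
  have hfp' := hfp t ht; rw [hfm] at hfp'
  simp only [bB_add_left, bB_smul_left] at hfp'
  have hfq' := hfq t ht; rw [hfm] at hfq'
  simp only [bB_add_left, bB_smul_left] at hfq'
  have htp' := htp t ht; rw [htm] at htp'
  simp only [bB_add_left, bB_smul_left] at htp'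
  have htq' := htq t ht; rw [htm] at htq'
  simp only [bB_add_left, bB_smul_left] at htq'
  have h7 := hp.2.2 t ht
  rw [hdP t ht, hxiw] at h7
  simp only [ContinuousLinearMap.add_apply, wedge_apply] at h7
  have h7k : deriv lam t • (a • σ₁ t + b • σ₂ t) + lam t • deriv fm t
      + (bB (σ₁ t) p₀ • b₁ - bB b₁ p₀ • σ₁ t) + (bB (σ₂ t) p₀ • b₂ - bB b₂ p₀ • σ₂ t) = 0 := by
    linear_combination (norm := module) h7 - (deriv lam t) • hfm
  have h8 := hq.2.2 t ht
  rw [hdQ t ht, hxiw] at h8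
  simp only [ContinuousLinearMap.add_apply, wedge_apply] at h8
  have h8k : al t • deriv fm t - deriv lam t • (e • σ₁ t + d • σ₂ t) - lam t • deriv tm t
      + (bB (σ₁ t) q₀ • b₁ - bB b₁ q₀ • σ₁ t) + (bB (σ₂ t) q₀ • b₂ - bB b₂ q₀ • σ₂ t) = 0 := by
    linear_combination (norm := module) h8 - (hdal t ht) • fm t + (deriv lam t) • htm
  have hxieq := keylem (σ₁ t) (σ₂ t) b₁ b₂ (deriv fm t) (deriv tm t) p₀ q₀ a b e d
    (lam t) (deriv lam t) (al t) hfp' hfq' htp' htq' (hdfq0 t ht) h7k h8k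
  rw [← hfm, ← htm] at hxieq
  have hxi2 : ξ t = al t • wedge (fm t) (deriv fm t) - deriv lam t • wedge (fm t) (tm t)
      + lam t • wedge (tm t) (deriv fm t) - lam t • wedge (fm t) (deriv tm t) := by
    rw [hxiw, hxieq]
  have hF : HasDerivAt (fun s => (-(c * lam s)) • wedge (fm s) (tm s))
      ((-(c * lam t)) • (wedge (deriv fm t) (tm t) + wedge (fm t) (deriv tm t))
        + (-(c * deriv lam t)) • wedge (fm t) (tm t)) t :=
    (((hdR lam hlam_sm t ht).const_mul c).neg).smul
      (hasDerivAt_wedge (hdV fm hfs t ht) (hdV tm hts t ht))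
  have hEE : (fun s => g s • wedge (σ₁ s) (σ₂ s))
      =ᶠ[nhds t] fun s => (-(c * lam s)) • wedge (fm s) (tm s) :=
    Filter.eventuallyEq_of_mem (hIo.mem_nhds ht) hgW
  have hderivG : deriv (fun s => g s • wedge (σ₁ s) (σ₂ s)) t
      = (-(c * lam t)) • (wedge (deriv fm t) (tm t) + wedge (fm t) (deriv tm t))
        + (-(c * deriv lam t)) • wedge (fm t) (tm t) := by
    rw [hEE.deriv_eq]; exact hF.deriv
  rw [hxi2, hderivG, wedge_swap (tm t) (deriv fm t)]
  linear_combination (norm := module) (hcal t ht) • wedge (fm t) (deriv fm t)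
end
end
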